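/- Let T be a commutative ring containing k_q := k[q^{±1}] with t ∈ T, t² = 0. In the quantum torus over T with skew form Λ, for c z^v a monomial and g := 1 + t ẑ^n (where ẑ^n = z^n/(q-q^{-1})), conjugation satisfies g^{-s} (c z^v) g^{s} = c z^v + c [|Λ(v,n)|]_q t z^{v+n}, where s = sign(Λ(v,n)). -/
import Mathlib


/-- Let `t` be a central square-zero element of the coefficients.  In the quantum torus
with skew form `Λ`, for a monomial `c z^v` and `g := 1 + t ẑ^n` (where
`ẑ^n := z^n/(q - q^{-1})`), conjugation satisfies
`g^{-s} (c z^v) g^{s} = c z^v + c [|Λ(v,n)|]_q t z^{v+n}` with `s = sign(Λ(v,n))`. -/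
theorem quantumTorus_wallcross_conjugation {A N : Type*} [Ring A] [AddCommGroup N]
    (q : Aˣ) (hq : ∀ x : A, (q : A) * x = x * (q : A))
    (Λ : N → N → ℤ) (hΛskew : ∀ a b, Λ a b = -Λ b a)
    (hΛaddl : ∀ a b c, Λ (a + b) c = Λ a c + Λ b c)
    (hΛaddr : ∀ a b c, Λ a (b + c) = Λ a b + Λ a c)
    (z : N → A)
    (hz : ∀ a b, z a * z b = ((q ^ Λ a b : Aˣ) : A) * z (a + b))
    (dU : Aˣ) (hdU : (dU : A) = (q : A) - ((q⁻¹ : Aˣ) : A))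
    (hdUc : ∀ x : A, (dU : A) * x = x * (dU : A))
    (zh : N → A) (hzh : ∀ m, zh m = ((dU⁻¹ : Aˣ) : A) * z m)
    (t : A) (ht : ∀ x : A, t * x = x * t) (ht2 : t * t = 0)
    (c : A) (hc : ∀ x : A, c * x = x * c)
    (v n : N)
    (g : Aˣ) (hg : (g : A) = 1 + t * zh n) :
    ((g ^ (-(Λ v n).sign) : Aˣ) : A) * (c * z v) * ((g ^ (Λ v n).sign : Aˣ) : A) =
      c * z v +
        c * ((((q ^ |Λ v n| : Aˣ) : A) - ((q ^ (-|Λ v n|) : Aˣ) : A)) *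
          ((dU⁻¹ : Aˣ) : A)) * t * z (v + n) := by
  set D : A := ((dU⁻¹ : Aˣ) : A) with hD
  have hdUinv : ∀ x : A, D * x = x * D := by
    intro x
    have h1 : (dU : A) * (D * x) = x := by rw [← mul_assoc, Units.mul_inv, one_mul]
    have h2 : (dU : A) * (x * D) = x := by
      rw [← mul_assoc, hdUc x, mul_assoc, Units.mul_inv, mul_one]
    exact (Units.mul_right_inj dU).mp (h1.trans h2.symm)
  set a : A := t * zh n with ha
  have haa0 : ∀ X : A, a * X * a = 0 := by
    intro X
    have h1 : a * X * a = t * ((zh n * X) * t) * zh n := by rw [ha]; noncomm_ring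
    rw [h1, ← ht (zh n * X), ← mul_assoc, ht2, zero_mul, zero_mul]
  have haa : a * a = 0 := by
    have := haa0 1
    rwa [mul_one] at this
  have hginv : ((g⁻¹ : Aˣ) : A) = 1 - a := by
    have h1 : (g : A) * (1 - a) = 1 := by
      have h2 : (1 + a) * (1 - a) = 1 - a * a := by noncomm_ring
      rw [hg, h2, haa, sub_zero]
    calc ((g⁻¹ : Aˣ) : A) = ((g⁻¹ : Aˣ) : A) * ((g : A) * (1 - a)) := by rw [h1, mul_one]
      _ = (((g⁻¹ : Aˣ) : A) * (g : A)) * (1 - a) := by rw [mul_assoc]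
      _ = 1 - a := by rw [Units.inv_mul, one_mul]
  have hzva : z v * a = t * (D * (((q ^ Λ v n : Aˣ) : A) * z (v + n))) := by
    rw [ha, hzh, ← mul_assoc, ← ht (z v), mul_assoc, ← mul_assoc (z v),
      ← hdUinv (z v), mul_assoc D, hz]
  have hazv : a * z v = t * (D * (((q ^ (-Λ v n) : Aˣ) : A) * z (v + n))) := by
    rw [ha, hzh, mul_assoc, mul_assoc, hz, hΛskew n v, add_comm n v]
  have e1 : a * (c * z v) = c * (a * z v) := by
    rw [← mul_assoc, ← hc a, mul_assoc]
  have f : ∀ Q : A, t * (D * (Q * z (v + n))) = Q * D * t * z (v + n) := by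
    intro Q
    calc t * (D * (Q * z (v + n))) = D * Q * (z (v + n) * t) := by rw [ht]; noncomm_ring
      _ = D * Q * (t * z (v + n)) := by rw [← ht (z (v + n))]
      _ = Q * D * (t * z (v + n)) := by rw [hdUinv Q]
      _ = Q * D * t * z (v + n) := by rw [← mul_assoc]
  rcases lt_trichotomy (Λ v n) 0 with hm | hm | hm
  · have hs : (Λ v n).sign = -1 := Int.sign_eq_neg_one_of_neg hm
    have habs : |Λ v n| = -Λ v n := abs_of_neg hm
    rw [hs, habs, neg_neg, neg_neg, zpow_one, zpow_neg_one, hg, hginv]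
    calc (1 + a) * (c * z v) * (1 - a)
        = c * z v + c * (a * z v) - c * (z v * a) - a * (c * z v) * a := by
          rw [← e1]; noncomm_ring
      _ = c * z v + c * (t * (D * (((q ^ (-Λ v n) : Aˣ) : A) * z (v + n))))
            - c * (t * (D * (((q ^ Λ v n : Aˣ) : A) * z (v + n)))) := by
          rw [haa0, hzva, hazv, sub_zero]
      _ = c * z v + c * (((q ^ (-Λ v n) : Aˣ) : A) * D * t * z (v + n))
            - c * (((q ^ Λ v n : Aˣ) : A) * D * t * z (v + n)) := by rw [f, f]
      _ = c * z v + c * ((((q ^ (-Λ v n) : Aˣ) : A) - ((q ^ Λ v n : Aˣ) : A)) * D)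
            * t * z (v + n) := by noncomm_ring
  · rw [hm]
    simp
  · have hs : (Λ v n).sign = 1 := Int.sign_eq_one_of_pos hm
    have habs : |Λ v n| = Λ v n := abs_of_pos hm
    rw [hs, habs, zpow_one, zpow_neg_one, hg, hginv]
    calc (1 - a) * (c * z v) * (1 + a)
        = c * z v + c * (z v * a) - c * (a * z v) - a * (c * z v) * a := by
          rw [← e1]; noncomm_ring
      _ = c * z v + c * (t * (D * (((q ^ Λ v n : Aˣ) : A) * z (v + n))))
            - c * (t * (D * (((q ^ (-Λ v n) : Aˣ) : A) * z (v + n)))) := by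
          rw [haa0, hzva, hazv, sub_zero]
      _ = c * z v + c * (((q ^ Λ v n : Aˣ) : A) * D * t * z (v + n))
            - c * (((q ^ (-Λ v n) : Aˣ) : A) * D * t * z (v + n)) := by rw [f, f]
      _ = c * z v + c * ((((q ^ Λ v n : Aˣ) : A) - ((q ^ (-Λ v n) : Aˣ) : A)) * D)
            * t * z (v + n) := by noncomm_ring
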